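/- arXiv:0708.1021 — 5 statements merged into one kernel-verified Lean document; each statement's English description precedes it below -/
import Mathlib

section
/- Let S be a maximal abelian subgroup of the n-qubit Pauli group modulo phase (i.e., a maximal totally isotropic subspace of F_2^{2n} under the symplectic form), in graph standard form so that the only element of S of the shape (v, 0) (pure Z-type) is the identity. Let C ⊆ F_2^n be a set of classical codewords containing 0, and let E be an error (v,u) with classical image Cl(v,u). Then for all distinct c_i, c_j ∈ C, the condition Z^{c_i} E Z^{c_j} ∉ ±S holds if and only if c_i ⊕ Cl(v,u) ≠ c_j. -/
open Finset

def dotp {n : ℕ} (a b : Fin n → ZMod 2) : ZMod 2 := ∑ i, a i * b i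

def eV {n : ℕ} (i : Fin n) : Fin n → ZMod 2 := Pi.single i 1

/-- Pauli operators modulo phase: `(v, u)` represents `Z^v X^u`. -/
abbrev PV (n : ℕ) := (Fin n → ZMod 2) × (Fin n → ZMod 2)

def clMap {n : ℕ} (r : Fin n → Fin n → ZMod 2) (p : PV n) : Fin n → ZMod 2 :=
  p.1 + ∑ l, p.2 l • r l

/-- The codeword stabilizer in graph standard form, modulo phase: the subspace
of `F_2^{2n}` spanned by the generators `S_l = X_l Z^{r_l} = (r_l, e_l)`. -/
def graphStab {n : ℕ} (r : Fin n → Fin n → ZMod 2) : Submodule (ZMod 2) (PV n) :=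
  Submodule.span (ZMod 2) (Set.range fun l => ((r l, eV l) : PV n))

lemma mem_graphStab {n : ℕ} (r : Fin n → Fin n → ZMod 2)
    (w u : Fin n → ZMod 2) :
    ((w, u) : PV n) ∈ graphStab r ↔ w = ∑ l, u l • r l := by
  rw [graphStab, Submodule.mem_span_range_iff_exists_fun]
  constructor
  · rintro ⟨c, hc⟩
    have h1 : (∑ l, c l • ((r l, eV l) : PV n)).1 = w := by rw [hc]
    have h2 : (∑ l, c l • ((r l, eV l) : PV n)).2 = u := by rw [hc]
    rw [Prod.fst_sum] at h1
    rw [Prod.snd_sum] at h2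
    have hcu : c = u := by
      rw [← h2]
      ext j
      rw [Finset.sum_apply]
      rw [Finset.sum_eq_single j]
      · simp [eV]
      · intro b _ hb
        simp [eV, Pi.single_eq_of_ne (Ne.symm hb)]
      · simp
    rw [← h1, hcu]
    rfl
  · intro hw
    refine ⟨u, ?_⟩
    have : (∑ l, u l • ((r l, eV l) : PV n)) =
        (∑ l, u l • r l, ∑ l, u l • eV l) := by
      rw [Prod.ext_iff, Prod.fst_sum, Prod.snd_sum]
      exact ⟨rfl, rfl⟩
    rw [this, Prod.mk.injEq]
    refine ⟨hw.symm, ?_⟩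
    ext j
    rw [Finset.sum_apply, Finset.sum_eq_single j]
    · simp [eV]
    · intro b _ hb
      simp [eV, Pi.single_eq_of_ne (Ne.symm hb)]
    · simp

/-- For a CWS code in graph standard form (stabilizer `S` spanned
by `(r_l, e_l)`, so that the only pure-`Z`-type element of `S` is the
identity), word operators `Z^c` for `c` in a classical code `C ∋ 0`, and an
error `E = (v,u)`: for all distinct `c_i, c_j ∈ C`, the condition
`Z^{c_i} E Z^{c_j} ∉ ±S` holds iff `c_i ⊕ Cl(v,u) ≠ c_j`. -/
theorem stmt2 {n : ℕ} (r : Fin n → Fin n → ZMod 2)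
    (hsym : ∀ i j, r i j = r j i) (hdiag : ∀ i, r i i = 0)
    (hZ : ∀ x : Fin n → ZMod 2, ((x, 0) : PV n) ∈ graphStab r → x = 0)
    (C : Set (Fin n → ZMod 2)) (h0 : 0 ∈ C)
    (v u : Fin n → ZMod 2)
    (ci cj : Fin n → ZMod 2) (hci : ci ∈ C) (hcj : cj ∈ C) (hne : ci ≠ cj) :
    (((ci + v + cj, u) : PV n) ∉ graphStab r) ↔ ci + clMap r (v, u) ≠ cj := by
  rw [mem_graphStab, clMap]
  simp only
  have hassoc : ci + (v + ∑ l, u l • r l) = ci + v + ∑ l, u l • r l :=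
    (add_assoc _ _ _).symm
  rw [hassoc]
  apply not_congr
  rw [funext_iff, funext_iff]
  apply forall_congr'
  intro j
  simp only [Pi.add_apply]
  exact (by decide : ∀ a b c : ZMod 2, a + b = c ↔ a + c = b) _ _ _
end

section
/- For the 5-qubit ring graph, no sum of two (not necessarily distinct) elements of the 15-element induced classical error set {e_i, e_{i−1}⊕e_{i+1}, e_{i−1}⊕e_i⊕e_{i+1} : i mod 5} equals the all-ones vector 11111 ∈ F_2^5. Consequently, the classical code {00000, 11111} detects all sums of pairs of these induced errors. -/
open Finset

/-- The 15 induced classical errors of the 5-ring: images of single-qubit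
`Z_i`, `X_i`, `Y_i` errors. -/
def ringErr5 : Set (Fin 5 → ZMod 2) :=
  {d | ∃ i : Fin 5, d = eV i ∨ d = eV (i - 1) + eV (i + 1)
        ∨ d = eV (i - 1) + eV i + eV (i + 1)}

/-- The all-ones vector `11111 ∈ F_2^5`. -/
def allOnes5 : Fin 5 → ZMod 2 := fun _ => 1

lemma ringErr5_key : ∀ d ∈ ringErr5, ∀ d' ∈ ringErr5, d + d' ≠ allOnes5 := by
  simp only [ringErr5, Set.mem_setOf_eq]
  rintro d ⟨i, hd⟩ d' ⟨j, hd'⟩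
  fin_cases i <;> fin_cases j <;>
    rcases hd with h|h|h <;> rcases hd' with h'|h'|h' <;> subst h h' <;> decide

/-- For the 5-ring, no sum of two (not necessarily distinct)
induced classical errors equals `11111`; consequently the classical code
`{00000, 11111}` detects all sums of pairs of these induced errors. -/
theorem stmt5 :
    (∀ d ∈ ringErr5, ∀ d' ∈ ringErr5, d + d' ≠ allOnes5)
    ∧ (∀ c ∈ ({0, allOnes5} : Set (Fin 5 → ZMod 2)),
        ∀ c' ∈ ({0, allOnes5} : Set (Fin 5 → ZMod 2)), c ≠ c' →
        ∀ d ∈ ringErr5, ∀ d' ∈ ringErr5, c + (d + d') ≠ c') := by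
  refine ⟨ringErr5_key, ?_⟩
  rintro c (rfl|rfl) c' (rfl|rfl) hne d hd d' hd' hc
  · exact hne rfl
  · exact ringErr5_key d hd d' hd' (by simpa using hc)
  · apply ringErr5_key d hd d' hd'
    have : allOnes5 + (d + d') + allOnes5 = 0 + allOnes5 := by rw [hc]
    simpa [add_comm, add_assoc, add_left_comm, CharTwo.add_self_eq_zero] using this
  · exact hne rfl
end

section
/- For every n ≥ 7, the classical code {0^n, 1^n} ⊆ F_2^n detects all sums of two (not necessarily distinct) induced classical errors of the n-ring: no sum of two elements of {e_i, e_{i−1}⊕e_{i+1}, e_{i−1}⊕e_i⊕e_{i+1} : i mod n} equals the all-ones vector, and each single induced error and each sum of two induced errors that is nonzero stays nonzero off the codeword differences. Consequently the corresponding CWS ring code is an ((n,2,3)) quantum code. -/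
open Finset

/-- The induced classical errors of the `n`-ring: images of single-qubit
`Z_i`, `X_i`, `Y_i` errors, namely `e_i`, `e_{i-1} ⊕ e_{i+1}` and
`e_{i-1} ⊕ e_i ⊕ e_{i+1}` (indices mod `n`). -/
def ringErr (n : ℕ) [NeZero n] : Set (Fin n → ZMod 2) :=
  {d | ∃ i : Fin n, d = eV i ∨ d = eV (i - 1) + eV (i + 1)
        ∨ d = eV (i - 1) + eV i + eV (i + 1)}

lemma ringErr_supp {n : ℕ} [NeZero n] {d : Fin n → ZMod 2}
    (hd : d ∈ ringErr n ∪ {0}) :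
    ∃ i : Fin n, ∀ j : Fin n, j ≠ i - 1 → j ≠ i → j ≠ i + 1 → d j = 0 := by
  rcases hd with ⟨i, h | h | h⟩ | h
  · exact ⟨i, fun j h1 h2 h3 => by simp [h, eV, Pi.single_eq_of_ne h2]⟩
  · exact ⟨i, fun j h1 h2 h3 => by
      simp [h, eV, Pi.single_eq_of_ne h1, Pi.single_eq_of_ne h3]⟩
  · exact ⟨i, fun j h1 h2 h3 => by
      simp [h, eV, Pi.single_eq_of_ne h1, Pi.single_eq_of_ne h2, Pi.single_eq_of_ne h3]⟩
  · exact ⟨0, fun j _ _ _ => by simp [Set.mem_singleton_iff.mp h]⟩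

lemma not_allones {n : ℕ} [NeZero n] (hn : 7 ≤ n) {d d' : Fin n → ZMod 2}
    (hd : d ∈ ringErr n ∪ {0}) (hd' : d' ∈ ringErr n ∪ {0}) :
    d + d' ≠ fun _ => (1 : ZMod 2) := by
  obtain ⟨i, hi⟩ := ringErr_supp hd
  obtain ⟨i', hi'⟩ := ringErr_supp hd'
  set T : Finset (Fin n) := {i - 1, i, i + 1, i' - 1, i', i' + 1} with hT
  have hTcard : T.card ≤ 6 := by
    refine (Finset.card_insert_le _ _).trans (Nat.add_le_add_right ?_ 1)
    refine (Finset.card_insert_le _ _).trans (Nat.add_le_add_right ?_ 1)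
    refine (Finset.card_insert_le _ _).trans (Nat.add_le_add_right ?_ 1)
    refine (Finset.card_insert_le _ _).trans (Nat.add_le_add_right ?_ 1)
    refine (Finset.card_insert_le _ _).trans (Nat.add_le_add_right ?_ 1)
    simp
  have hlt : T.card < (Finset.univ : Finset (Fin n)).card := by
    rw [Finset.card_univ, Fintype.card_fin]; omega
  have hne : T ≠ Finset.univ := fun h => by rw [h] at hlt; omega
  obtain ⟨j, hj⟩ : ∃ j, j ∉ T := by
    by_contra hc; push_neg at hc; exact hne (Finset.eq_univ_iff_forall.mpr hc)
  simp only [hT, Finset.mem_insert, Finset.mem_singleton, not_or] at hj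
  obtain ⟨a1, a2, a3, a4, a5, a6⟩ := hj
  intro h
  have := congrFun h j
  rw [Pi.add_apply, hi j a1 a2 a3, hi' j a4 a5 a6] at this
  simp at this

open Fin.NatCast Fin.CommRing

/-- For every `n ≥ 7`, the classical code `{0^n, 1^n} ⊆ F_2^n`
detects all sums of at most two induced classical errors of the `n`-ring:
no sum of two induced errors equals the all-ones vector, no single induced
error equals `0` or the all-ones vector, and for distinct codewords `c ≠ c'`
and any sum `s` of at most two induced errors, `c + s ≠ c'`.  Consequently the
corresponding CWS ring code is an `((n,2,3))` quantum code. -/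
theorem stmt7 (n : ℕ) [NeZero n] (hn : 7 ≤ n) :
    (∀ d ∈ ringErr n, d ≠ 0 ∧ d ≠ fun _ => (1 : ZMod 2))
    ∧ (∀ d ∈ ringErr n, ∀ d' ∈ ringErr n, d + d' ≠ fun _ => (1 : ZMod 2))
    ∧ (∀ c ∈ ({0, fun _ => 1} : Set (Fin n → ZMod 2)),
        ∀ c' ∈ ({0, fun _ => 1} : Set (Fin n → ZMod 2)), c ≠ c' →
        ∀ d ∈ ringErr n ∪ {0}, ∀ d' ∈ ringErr n ∪ {0}, c + d + d' ≠ c') := by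
  have h1 : (1 : Fin n) ≠ 0 := by
    have : ((1 : ℕ) : Fin n) ≠ 0 := by
      rw [Ne, Fin.natCast_eq_zero]
      intro hdvd
      exact absurd (Nat.le_of_dvd (by norm_num) hdvd) (by omega)
    simpa [one_add_one_eq_two] using this
  have h2 : (1 : Fin n) + 1 ≠ 0 := by
    have : ((2 : ℕ) : Fin n) ≠ 0 := by
      rw [Ne, Fin.natCast_eq_zero]
      intro hdvd
      exact absurd (Nat.le_of_dvd (by norm_num) hdvd) (by omega)
    simpa [one_add_one_eq_two] using this
  refine ⟨?_, ?_, ?_⟩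
  · intro d hd
    constructor
    · rcases hd with ⟨i, h | h | h⟩
      · intro h0
        have := congrFun h0 i
        rw [h] at this
        simp [eV] at this
      · intro h0
        have := congrFun h0 (i + 1)
        rw [h] at this
        have hne : i - 1 ≠ i + 1 := by
          intro he
          apply h2
          have : i + 1 - (i - 1) = 0 := by rw [← he]; ring
          rw [show (1 : Fin n) + 1 = i + 1 - (i - 1) by ring, this]
        simp [eV, Pi.single_eq_of_ne hne.symm] at this
      · intro h0
        have := congrFun h0 i
        rw [h] at this
        have e1 : i - 1 ≠ i := fun he => h1 (by
          rw [show (1 : Fin n) = i - (i - 1) by ring, he, sub_self])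
        have e2 : i + 1 ≠ i := fun he => h1 (by
          rw [show (1 : Fin n) = i + 1 - i by ring, he, sub_self])
        simp [eV, Pi.single_eq_of_ne e1.symm, Pi.single_eq_of_ne e2.symm] at this
    · intro h0
      have := not_allones hn (Or.inl hd) (Or.inr rfl) (d' := 0)
      simp [h0] at this
  · intro d hd d' hd'
    exact not_allones hn (Or.inl hd) (Or.inl hd')
  · intro c hc c' hc' hcc d hd d' hd' h
    have hdd : d + d' = c' - c := by
      have : c + (d + d') = c' := by rw [← h]; ring
      rw [← this]; ring
    rcases hc with rfl | hc <;> rcases hc' with rfl | hc'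
    · exact hcc rfl
    · rw [Set.mem_singleton_iff.mp hc'] at hdd
      exact not_allones hn hd hd' (by rw [hdd]; funext j; simp)
    · rw [Set.mem_singleton_iff.mp hc] at hdd
      exact not_allones hn hd hd' (by rw [hdd]; funext j; simp)
    · rw [Set.mem_singleton_iff.mp hc, Set.mem_singleton_iff.mp hc'] at hcc
      exact hcc rfl
end

section
/- The 12-element classical code {000000000, 100100100, 010001100, 110101000, 000110001, 100010101, 011001010, 111101110, 001010011, 101110111, 011111111, 111011011} ⊆ F_2^9 detects all sums of two (not necessarily distinct) induced classical errors of the 9-ring: for all distinct codewords c ≠ c' and all d, d' in the 27-element set {e_i, e_{i−1}⊕e_{i+1}, e_{i−1}⊕e_i⊕e_{i+1} : i mod 9} ∪ {0} with (d,d') not both 0, c ⊕ d ⊕ d' ≠ c', and additionally each nonzero sum d ⊕ d' with d,d' single induced errors is handled so that the quantum code has distance 3. -/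
open Finset

/-- The 27 induced classical errors of the 9-ring. -/
def ringErr9 : Set (Fin 9 → ZMod 2) :=
  {d | ∃ i : Fin 9, d = eV i ∨ d = eV (i - 1) + eV (i + 1)
        ∨ d = eV (i - 1) + eV i + eV (i + 1)}

/-- The classical code of the nonadditive ((9,12,3)) CWS code. -/
def code9123 : Set (Fin 9 → ZMod 2) :=
  { ![0,0,0,0,0,0,0,0,0], ![1,0,0,1,0,0,1,0,0], ![0,1,0,0,0,1,1,0,0],
    ![1,1,0,1,0,1,0,0,0], ![0,0,0,1,1,0,0,0,1], ![1,0,0,0,1,0,1,0,1],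
    ![0,1,1,0,0,1,0,1,0], ![1,1,1,1,0,1,1,1,0], ![0,0,1,0,1,0,0,1,1],
    ![1,0,1,1,1,0,1,1,1], ![0,1,1,1,1,1,1,1,1], ![1,1,1,0,1,1,0,1,1] }

/- ## Auxiliary machinery: encode vectors as natural numbers -/

def toL (v : Fin 9 → ZMod 2) : List Bool := List.ofFn fun i => decide (v i = 1)

lemma toL_add (v w : Fin 9 → ZMod 2) : toL (v + w) = List.zipWith xor (toL v) (toL w) := by
  unfold toL
  apply List.ext_getElem
  · simp
  · intro i h1 h2
    have key : ∀ a b : ZMod 2, decide (a + b = 1) = xor (decide (a = 1)) (decide (b = 1)) := by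
      decide
    simp [List.getElem_zipWith, List.getElem_ofFn, key]

lemma toL_inj {v w : Fin 9 → ZMod 2} (h : toL v = toL w) : v = w := by
  funext i
  have h2 := congrFun (List.ofFn_inj.mp h) i
  have key : ∀ a b : ZMod 2, decide (a = 1) = decide (b = 1) → a = b := by decide
  exact key _ _ h2

def natOfL : List Bool → ℕ := fun l => l.foldr (fun b n => Nat.bit b n) 0

lemma natOfL_zipWith : ∀ l1 l2 : List Bool, l1.length = l2.length →
    natOfL (List.zipWith xor l1 l2) = natOfL l1 ^^^ natOfL l2 := by
  intro l1
  induction l1 with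
  | nil => intro l2 h; cases l2 <;> simp_all [natOfL]
  | cons a t ih =>
    intro l2 h
    cases l2 with
    | nil => simp at h
    | cons b t2 =>
      simp only [List.length_cons, Nat.add_right_cancel_iff] at h
      simp only [List.zipWith_cons_cons, natOfL, List.foldr_cons]
      rw [show (t.zipWith xor t2).foldr (fun b n => Nat.bit b n) 0 = natOfL (List.zipWith xor t t2) from rfl,
        ih t2 h, Nat.xor_bit]
      cases a <;> cases b <;> rfl

lemma natOfL_inj : ∀ l1 l2 : List Bool, l1.length = l2.length →
    natOfL l1 = natOfL l2 → l1 = l2 := by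
  intro l1
  induction l1 with
  | nil => intro l2 h _; cases l2 <;> simp_all
  | cons a t ih =>
    intro l2 h he
    cases l2 with
    | nil => simp at h
    | cons b t2 =>
      simp only [List.length_cons, Nat.add_right_cancel_iff] at h
      simp only [natOfL, List.foldr_cons] at he
      have hb : a = b ∧ (t.foldr (fun b n => Nat.bit b n) 0) = (t2.foldr (fun b n => Nat.bit b n) 0) := by
        cases a <;> cases b <;> simp [Nat.bit] at he ⊢ <;> omega
      rw [hb.1, ih t2 h hb.2]

def toN (v : Fin 9 → ZMod 2) : ℕ := natOfL (toL v)

lemma toN_add (v w : Fin 9 → ZMod 2) : toN (v + w) = toN v ^^^ toN w := by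
  rw [toN, toL_add, natOfL_zipWith _ _ (by simp [toL])]; rfl

lemma toN_inj {v w : Fin 9 → ZMod 2} (h : toN v = toN w) : v = w :=
  toL_inj (natOfL_inj _ _ (by simp [toL]) h)

/- ## The numeric core -/

def codeN : List Nat := [0, 73, 98, 43, 280, 337, 166, 239, 404, 477, 510, 439]
def errN : List Nat := [1, 258, 259, 2, 5, 7, 4, 10, 14, 8, 20, 28, 16, 40, 56, 32, 80, 112, 64, 160, 224, 128, 320, 448, 256, 129, 385]
def errN0 : List Nat := errN ++ [0]

set_option maxRecDepth 10000 in
set_option maxHeartbeats 2000000 in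
lemma coreA : ∀ c ∈ codeN, ∀ d ∈ errN0, ∀ d' ∈ errN0,
    c ^^^ d ^^^ d' = c ∨ c ^^^ d ^^^ d' ∉ codeN := by
  have h : (codeN.all fun c => errN0.all fun d => errN0.all fun d' =>
      (decide (c ^^^ d ^^^ d' = c) || decide (c ^^^ d ^^^ d' ∉ codeN))) = true := by decide
  simp only [List.all_eq_true, Bool.or_eq_true, decide_eq_true_eq] at h
  exact h

set_option maxHeartbeats 1000000 in
lemma coreB : ∀ d ∈ errN, d ≠ 0 := by decide

set_option maxHeartbeats 1000000 in
lemma coreC : ∀ d ∈ errN, ∀ d' ∈ errN, d = d' ∨ d ^^^ d' ≠ 0 := by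
  have h : (errN.all fun d => errN.all fun d' =>
      (decide (d = d') || decide (d ^^^ d' ≠ 0))) = true := by decide
  simp only [List.all_eq_true, Bool.or_eq_true, decide_eq_true_eq] at h
  exact h

/- ## Membership transfer -/

lemma memCode : ∀ c ∈ code9123, toN c ∈ codeN := by
  intro c hc
  simp only [code9123, Set.mem_insert_iff, Set.mem_singleton_iff] at hc
  rcases hc with rfl|rfl|rfl|rfl|rfl|rfl|rfl|rfl|rfl|rfl|rfl|rfl <;> decide

lemma memErr : ∀ d ∈ ringErr9, toN d ∈ errN := by
  rintro d ⟨i, hi⟩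
  fin_cases i <;> rcases hi with rfl|rfl|rfl <;> decide

lemma toN_zero : toN 0 = 0 := by decide

/-- The 12-element classical code underlying the ((9,12,3)) code
detects all sums of two (not necessarily distinct) induced classical errors of
the 9-ring: for all distinct codewords `c ≠ c'` and all `d, d'` in the induced
error set together with `0`, `c ⊕ d ⊕ d' ≠ c'`; additionally distinct induced
errors have nonzero sum (so the quantum code has distance 3). -/
theorem stmt8 :
    (∀ c ∈ code9123, ∀ c' ∈ code9123, c ≠ c' →
      ∀ d ∈ ringErr9 ∪ {0}, ∀ d' ∈ ringErr9 ∪ {0}, c + d + d' ≠ c')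
    ∧ (∀ d ∈ ringErr9, d ≠ 0)
    ∧ (∀ d ∈ ringErr9, ∀ d' ∈ ringErr9, d ≠ d' → d + d' ≠ 0) := by
  refine ⟨?_, ?_, ?_⟩
  · intro c hc c' hc' hne d hd d' hd' heq
    have hcN := memCode c hc
    have hc'N := memCode c' hc'
    have hdN : toN d ∈ errN0 := by
      rcases hd with h | h
      · exact List.mem_append_left _ (memErr d h)
      · rw [Set.mem_singleton_iff] at h; subst h; rw [toN_zero]; decide
    have hd'N : toN d' ∈ errN0 := by
      rcases hd' with h | h
      · exact List.mem_append_left _ (memErr d' h)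
      · rw [Set.mem_singleton_iff] at h; subst h; rw [toN_zero]; decide
    have hx : toN c ^^^ toN d ^^^ toN d' = toN c' := by
      rw [← toN_add, ← toN_add, heq]
    rcases coreA (toN c) hcN (toN d) hdN (toN d') hd'N with h | h
    · exact hne (toN_inj (hx.symm.trans h)).symm
    · exact h (hx ▸ hc'N)
  · intro d hd heq
    exact coreB (toN d) (memErr d hd) (by rw [heq, toN_zero])
  · intro d hd d' hd' hne heq
    rcases coreC (toN d) (memErr d hd) (toN d') (memErr d' hd') with h | h
    · exact hne (toN_inj h)
    · exact h (by rw [← toN_add, heq, toN_zero])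
end

section
/- For the 10-vertex double-ring graph (two 5-cycles 1-2-3-4-5 and 6-7-8-9-10 with spokes i ↔ i+5), the 20-element classical code {0000000000, 1100101101, 1100000100, 0010010010, 1001100100, 0111011011, 1101111110, 0010111011, 1001101111, 0111010000, 1111000101, 1011010100, 0101100000, 1011011111, 0101101011, 0011000001, 0000101001, 1110010110, 0001111010, 1110111111} detects all sums of at most two induced classical errors, establishing a ((10,20,3)) quantum CWS code. -/
open Finset

/-- Adjacency rows of the 10-vertex double-ring graph: two 5-cycles
`1-2-3-4-5` and `6-7-8-9-10` with spokes `i ↔ i+5` (0-indexed here).  The rows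
correspond to the stabilizer generators `S_1 = XZIIZZIIII`, …,
`S_10 = IIIIZZIIZX`. -/
def dblRing : Fin 10 → Fin 10 → ZMod 2 :=
  ![ ![0,1,0,0,1,1,0,0,0,0],
     ![1,0,1,0,0,0,1,0,0,0],
     ![0,1,0,1,0,0,0,1,0,0],
     ![0,0,1,0,1,0,0,0,1,0],
     ![1,0,0,1,0,0,0,0,0,1],
     ![1,0,0,0,0,0,1,0,0,1],
     ![0,1,0,0,0,1,0,1,0,0],
     ![0,0,1,0,0,0,1,0,1,0],
     ![0,0,0,1,0,0,0,1,0,1],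
     ![0,0,0,0,1,1,0,0,1,0] ]

/-- The induced classical errors of the double ring: images `e_i`, `r_i`,
`e_i ⊕ r_i` of the single-qubit errors `Z_i`, `X_i`, `Y_i`. -/
def dblRingErr : Set (Fin 10 → ZMod 2) :=
  {d | ∃ i : Fin 10, d = eV i ∨ d = dblRing i ∨ d = eV i + dblRing i}

/-- The 20-element classical code of the ((10,20,3)) double-ring CWS code. -/
def code10203 : Set (Fin 10 → ZMod 2) :=
  { ![0,0,0,0,0,0,0,0,0,0], ![1,1,0,0,1,0,1,1,0,1], ![1,1,0,0,0,0,0,1,0,0],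
    ![0,0,1,0,0,1,0,0,1,0], ![1,0,0,1,1,0,0,1,0,0], ![0,1,1,1,0,1,1,0,1,1],
    ![1,1,0,1,1,1,1,1,1,0], ![0,0,1,0,1,1,1,0,1,1], ![1,0,0,1,1,0,1,1,1,1],
    ![0,1,1,1,0,1,0,0,0,0], ![1,1,1,1,0,0,0,1,0,1], ![1,0,1,1,0,1,0,1,0,0],
    ![0,1,0,1,1,0,0,0,0,0], ![1,0,1,1,0,1,1,1,1,1], ![0,1,0,1,1,0,1,0,1,1],
    ![0,0,1,1,0,0,0,0,0,1], ![0,0,0,0,1,0,1,0,0,1], ![1,1,1,0,0,1,0,1,1,0],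
    ![0,0,0,1,1,1,1,0,1,0], ![1,1,1,0,1,1,1,1,1,1] }


def natC : List ℕ := [0, 723, 131, 292, 153, 878, 507, 884, 985, 46, 655, 173, 26, 1005, 858, 524, 592, 423, 376, 1015]
def natE : List ℕ := [1, 50, 51, 2, 69, 71, 4, 138, 142, 8, 276, 284, 16, 521, 537, 32, 577, 609, 64, 162, 226, 128, 324, 452, 256, 648, 904, 512, 304, 816]
def natE0 : List ℕ := 0 :: natE

def chk (a : ℕ) : Bool :=
  natC.all fun b => natE0.all fun s => natE0.all fun s' =>
    (a == b) || !(a ^^^ s ^^^ s' == b)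

theorem chk_prop (a : ℕ) (h : chk a = true) :
    ∀ b ∈ natC, ∀ s ∈ natE0, ∀ s' ∈ natE0, a = b ∨ a ^^^ s ^^^ s' ≠ b := by
  simp only [chk, List.all_eq_true, Bool.or_eq_true, beq_iff_eq, Bool.not_eq_true',
    beq_eq_false_iff_ne, ne_eq] at h
  exact h

set_option maxHeartbeats 2000000 in
theorem chk0 : chk 0 = true := by decide

set_option maxHeartbeats 2000000 in
theorem chk1 : chk 723 = true := by decide

set_option maxHeartbeats 2000000 in
theorem chk2 : chk 131 = true := by decide

set_option maxHeartbeats 2000000 in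
theorem chk3 : chk 292 = true := by decide

set_option maxHeartbeats 2000000 in
theorem chk4 : chk 153 = true := by decide

set_option maxHeartbeats 2000000 in
theorem chk5 : chk 878 = true := by decide

set_option maxHeartbeats 2000000 in
theorem chk6 : chk 507 = true := by decide

set_option maxHeartbeats 2000000 in
theorem chk7 : chk 884 = true := by decide

set_option maxHeartbeats 2000000 in
theorem chk8 : chk 985 = true := by decide

set_option maxHeartbeats 2000000 in
theorem chk9 : chk 46 = true := by decide

set_option maxHeartbeats 2000000 in
theorem chk10 : chk 655 = true := by decide

set_option maxHeartbeats 2000000 in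
theorem chk11 : chk 173 = true := by decide

set_option maxHeartbeats 2000000 in
theorem chk12 : chk 26 = true := by decide

set_option maxHeartbeats 2000000 in
theorem chk13 : chk 1005 = true := by decide

set_option maxHeartbeats 2000000 in
theorem chk14 : chk 858 = true := by decide

set_option maxHeartbeats 2000000 in
theorem chk15 : chk 524 = true := by decide

set_option maxHeartbeats 2000000 in
theorem chk16 : chk 592 = true := by decide

set_option maxHeartbeats 2000000 in
theorem chk17 : chk 423 = true := by decide

set_option maxHeartbeats 2000000 in
theorem chk18 : chk 376 = true := by decide

set_option maxHeartbeats 2000000 in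
theorem chk19 : chk 1015 = true := by decide

theorem chkAll : ∀ a ∈ natC, ∀ b ∈ natC, ∀ s ∈ natE0, ∀ s' ∈ natE0,
    a = b ∨ a ^^^ s ^^^ s' ≠ b := by
  intro a ha
  simp only [natC, List.mem_cons, List.not_mem_nil, or_false] at ha
  rcases ha with rfl | rfl | rfl | rfl | rfl | rfl | rfl | rfl | rfl | rfl | rfl | rfl | rfl | rfl | rfl | rfl | rfl | rfl | rfl | rfl
  · exact chk_prop _ chk0
  · exact chk_prop _ chk1
  · exact chk_prop _ chk2
  · exact chk_prop _ chk3
  · exact chk_prop _ chk4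
  · exact chk_prop _ chk5
  · exact chk_prop _ chk6
  · exact chk_prop _ chk7
  · exact chk_prop _ chk8
  · exact chk_prop _ chk9
  · exact chk_prop _ chk10
  · exact chk_prop _ chk11
  · exact chk_prop _ chk12
  · exact chk_prop _ chk13
  · exact chk_prop _ chk14
  · exact chk_prop _ chk15
  · exact chk_prop _ chk16
  · exact chk_prop _ chk17
  · exact chk_prop _ chk18
  · exact chk_prop _ chk19

/-! ### Nat encoding of bit vectors -/

def encL : List (ZMod 2) → ℕ
  | [] => 0
  | x :: l => Nat.bit (decide (x = 1)) (encL l)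

@[simp] lemma encL_nil : encL [] = 0 := rfl
@[simp] lemma encL_cons (x : ZMod 2) (l : List (ZMod 2)) :
    encL (x :: l) = Nat.bit (decide (x = 1)) (encL l) := rfl

def encN {n : ℕ} (v : Fin n → ZMod 2) : ℕ := encL (List.ofFn v)

lemma decide_add_eq : ∀ x y : ZMod 2,
    decide (x + y = 1) = (decide (x = 1) != decide (y = 1)) := by decide

lemma encN_add : ∀ {n : ℕ} (v w : Fin n → ZMod 2), encN (v + w) = encN v ^^^ encN w := by
  intro n
  induction n with
  | zero => intro v w; simp [encN, List.ofFn_zero]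
  | succ m ih =>
    intro v w
    simp only [encN, List.ofFn_succ, encL_cons]
    rw [Nat.xor_bit]
    have h1 : (v + w) 0 = v 0 + w 0 := rfl
    have h2 : (fun i : Fin m => (v + w) i.succ)
        = (fun i : Fin m => v i.succ) + (fun i : Fin m => w i.succ) := rfl
    rw [h1, h2, decide_add_eq]
    have h3 := ih (fun i : Fin m => v i.succ) (fun i : Fin m => w i.succ)
    simp only [encN] at h3
    rw [h3]

def codeList : List (Fin 10 → ZMod 2) :=
  [ ![0,0,0,0,0,0,0,0,0,0], ![1,1,0,0,1,0,1,1,0,1], ![1,1,0,0,0,0,0,1,0,0],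
    ![0,0,1,0,0,1,0,0,1,0], ![1,0,0,1,1,0,0,1,0,0], ![0,1,1,1,0,1,1,0,1,1],
    ![1,1,0,1,1,1,1,1,1,0], ![0,0,1,0,1,1,1,0,1,1], ![1,0,0,1,1,0,1,1,1,1],
    ![0,1,1,1,0,1,0,0,0,0], ![1,1,1,1,0,0,0,1,0,1], ![1,0,1,1,0,1,0,1,0,0],
    ![0,1,0,1,1,0,0,0,0,0], ![1,0,1,1,0,1,1,1,1,1], ![0,1,0,1,1,0,1,0,1,1],
    ![0,0,1,1,0,0,0,0,0,1], ![0,0,0,0,1,0,1,0,0,1], ![1,1,1,0,0,1,0,1,1,0],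
    ![0,0,0,1,1,1,1,0,1,0], ![1,1,1,0,1,1,1,1,1,1] ]

def errList : List (Fin 10 → ZMod 2) :=
  (List.finRange 10).flatMap fun i => [eV i, dblRing i, eV i + dblRing i]

lemma mem_codeList {c : Fin 10 → ZMod 2} (hc : c ∈ code10203) : c ∈ codeList := by
  simp only [code10203, Set.mem_insert_iff, Set.mem_singleton_iff] at hc
  simp only [codeList, List.mem_cons, List.not_mem_nil, or_false]
  exact hc

lemma mem_errList {d : Fin 10 → ZMod 2} (hd : d ∈ dblRingErr) : d ∈ errList := by
  obtain ⟨i, h⟩ := hd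
  refine List.mem_flatMap.mpr ⟨i, List.mem_finRange i, ?_⟩
  rcases h with h | h | h <;> simp [h]

set_option maxHeartbeats 2000000 in
lemma map_codeList : codeList.map encN = natC := by decide

set_option maxHeartbeats 2000000 in
lemma map_errList : errList.map encN = natE := by decide

lemma encN_mem_natC {c : Fin 10 → ZMod 2} (hc : c ∈ code10203) : encN c ∈ natC :=
  map_codeList ▸ List.mem_map.mpr ⟨c, mem_codeList hc, rfl⟩

lemma encN_mem_natE {d : Fin 10 → ZMod 2} (hd : d ∈ dblRingErr) : encN d ∈ natE :=
  map_errList ▸ List.mem_map.mpr ⟨d, mem_errList hd, rfl⟩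

lemma encN_zero : encN (0 : Fin 10 → ZMod 2) = 0 := rfl

lemma injC {c : Fin 10 → ZMod 2} (hc : c ∈ code10203) {c' : Fin 10 → ZMod 2}
    (hc' : c' ∈ code10203) (h : encN c = encN c') : c = c' := by
  have hnd : (codeList.map encN).Nodup := by rw [map_codeList]; decide
  exact List.inj_on_of_nodup_map hnd (mem_codeList hc) (mem_codeList hc') h

lemma injE {d : Fin 10 → ZMod 2} (hd : d ∈ dblRingErr) {d' : Fin 10 → ZMod 2}
    (hd' : d' ∈ dblRingErr) (h : encN d = encN d') : d = d' := by
  have hnd : (errList.map encN).Nodup := by rw [map_errList]; decide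
  exact List.inj_on_of_nodup_map hnd (mem_errList hd) (mem_errList hd') h


/-- The 20-element classical code detects all sums of at most
two induced classical errors of the 10-vertex double-ring graph (and all such
nonzero error sums are distinguished), establishing the ((10,20,3)) quantum
CWS code. -/
theorem stmt19 :
    (∀ c ∈ code10203, ∀ c' ∈ code10203, c ≠ c' →
      ∀ d ∈ dblRingErr ∪ {0}, ∀ d' ∈ dblRingErr ∪ {0}, c + d + d' ≠ c')
    ∧ (∀ d ∈ dblRingErr, d ≠ 0)
    ∧ (∀ d ∈ dblRingErr, ∀ d' ∈ dblRingErr, d ≠ d' → d + d' ≠ 0) := by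
  have memE0 : ∀ d : Fin 10 → ZMod 2, d ∈ dblRingErr ∪ {0} → encN d ∈ natE0 := by
    intro d hd
    rcases hd with hd | hd
    · exact List.mem_cons_of_mem _ (encN_mem_natE hd)
    · rw [Set.mem_singleton_iff] at hd
      rw [hd, encN_zero]
      exact List.mem_cons_self
  refine ⟨?_, ?_, ?_⟩
  · intro c hc c' hc' hne d hd d' hd' heq
    have h := congrArg encN heq
    rw [encN_add, encN_add] at h
    rcases chkAll _ (encN_mem_natC hc) _ (encN_mem_natC hc')
        _ (memE0 d hd) _ (memE0 d' hd') with h' | h'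
    · exact hne (injC hc hc' h')
    · exact h' h
  · intro d hd h0
    have := encN_mem_natE hd
    rw [h0, encN_zero] at this
    revert this
    decide
  · intro d hd d' hd' hne hsum
    apply hne
    apply injE hd hd'
    have h := congrArg encN hsum
    rw [encN_add, encN_zero] at h
    exact xor_eq_zero_iff.mp h
end
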